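/- arXiv:2207.09944 — 4 statements merged into one kernel-verified Lean document; each statement's English description precedes it below -/
import Mathlib

section
/- Let F be a set of predictors and for each f ∈ F let μ̂_f ∈ ℝ and σ̂_f ≥ 0 be its mean and standard deviation of risks. Assume: (1) there exists f₀ ∈ F with σ̂_{f₀} = 0 and μ̂_{f₀} < ∞; (2) μ* := inf_{f ∈ F} μ̂_f > -∞. For α ∈ (1/2, 1), let f̂_α be a minimizer of f ↦ μ̂_f + Φ⁻¹(α)·σ̂_f, where Φ⁻¹ is the standard normal quantile function. Then σ̂_{f̂_α} ≤ (μ̂_{f₀} − μ*)/Φ⁻¹(α), so σ̂_{f̂_α} → 0 as α → 1, and μ̂_{f̂_α} ≤ μ̂_{f₀} for all α ∈ (1/2, 1). -/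
open Filter

/-!
Comparing the minimizer `f̂` of `μ + λ σ` with `f₀`, whose penalty vanishes, gives
`μ f̂ + λ σ f̂ ≤ μ f₀`. Since `σ ≥ 0` this bounds `μ f̂` by `μ f₀`, and since `μ f̂ ≥ inf μ` it
bounds `λ σ f̂` by `μ f₀ - inf μ`; with `λ = Φ⁻¹(α) → ∞` the penalty is squeezed to `0`.
-/

section PenalizedMinimizer

variable {F : Type*} {μ σ : F → ℝ} {lam : ℝ} {g f₀ : F}

theorem add_mul_le_of_penalty_eq_zero (hg : ∀ f, μ g + lam * σ g ≤ μ f + lam * σ f)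
    (hf₀ : σ f₀ = 0) : μ g + lam * σ g ≤ μ f₀ := by
  simpa [hf₀] using hg f₀

theorem le_of_penalized_min (hg : ∀ f, μ g + lam * σ g ≤ μ f + lam * σ f) (hf₀ : σ f₀ = 0)
    (hlam : 0 ≤ lam) (hσ : 0 ≤ σ g) : μ g ≤ μ f₀ := by
  nlinarith [add_mul_le_of_penalty_eq_zero hg hf₀]

theorem penalty_le_div_of_penalized_min (hg : ∀ f, μ g + lam * σ g ≤ μ f + lam * σ f)
    (hf₀ : σ f₀ = 0) (hbdd : BddBelow (Set.range μ)) (hlam : 0 < lam) :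
    σ g ≤ (μ f₀ - sInf (Set.range μ)) / lam := by
  rw [le_div_iff₀' hlam]
  have hinf : sInf (Set.range μ) ≤ μ g := csInf_le hbdd ⟨g, rfl⟩
  linarith [add_mul_le_of_penalty_eq_zero hg hf₀]

end PenalizedMinimizer

theorem tendsto_zero_of_le_div_of_tendsto_atTop {ι : Type*} {l : Filter ι} {s w : ι → ℝ}
    {C : ℝ} (hw : Tendsto w l atTop) (hs₀ : ∀ᶠ i in l, 0 ≤ s i)
    (hs : ∀ᶠ i in l, s i ≤ C / w i) : Tendsto s l (nhds 0) :=
  squeeze_zero' hs₀ hs (tendsto_const_nhds.div_atTop hw)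

/-- Gaussian EQRM learns a minimal invariant-risk predictor as `α → 1`:
if some `f₀` has zero risk-standard-deviation, mean risks are bounded below,
and `f̂ α` minimizes `μ̂ f + Φ⁻¹(α) · σ̂ f` (where `Φ⁻¹` is the standard normal
quantile, positive on `(1/2,1)` and tending to `∞` as `α → 1`), then
`σ̂ (f̂ α) ≤ (μ̂ f₀ − μ*)/Φ⁻¹(α)`, so `σ̂ (f̂ α) → 0` as `α → 1`, and
`μ̂ (f̂ α) ≤ μ̂ f₀` for all `α ∈ (1/2, 1)`. -/
theorem gaussian_eqrm_invariant_risk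
    {F : Type*} (μ σ : F → ℝ) (hσ : ∀ f, 0 ≤ σ f)
    (f₀ : F) (hf₀ : σ f₀ = 0)
    (hbdd : BddBelow (Set.range μ))
    (Φinv : ℝ → ℝ)
    (hΦpos : ∀ α ∈ Set.Ioo (1/2 : ℝ) 1, 0 < Φinv α)
    (hΦtop : Tendsto Φinv (nhdsWithin 1 (Set.Iio 1)) atTop)
    (fhat : ℝ → F)
    (hmin : ∀ α ∈ Set.Ioo (1/2 : ℝ) 1, ∀ f : F,
      μ (fhat α) + Φinv α * σ (fhat α) ≤ μ f + Φinv α * σ f) :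
    (∀ α ∈ Set.Ioo (1/2 : ℝ) 1,
        σ (fhat α) ≤ (μ f₀ - sInf (Set.range μ)) / Φinv α) ∧
    Tendsto (fun α => σ (fhat α)) (nhdsWithin 1 (Set.Iio 1)) (nhds 0) ∧
    (∀ α ∈ Set.Ioo (1/2 : ℝ) 1, μ (fhat α) ≤ μ f₀) := by
  have hbound : ∀ α ∈ Set.Ioo (1/2 : ℝ) 1,
      σ (fhat α) ≤ (μ f₀ - sInf (Set.range μ)) / Φinv α := fun α hα =>
    penalty_le_div_of_penalized_min (hmin α hα) hf₀ hbdd (hΦpos α hα)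
  have hnear : ∀ᶠ α in nhdsWithin 1 (Set.Iio 1), α ∈ Set.Ioo (1/2 : ℝ) 1 :=
    Ioo_mem_nhdsLT_of_mem (by norm_num)
  refine ⟨hbound, ?_, fun α hα => le_of_penalized_min (hmin α hα) hf₀ (hΦpos α hα).le (hσ _)⟩
  exact tendsto_zero_of_le_div_of_tendsto_atTop hΦtop (Eventually.of_forall fun α => hσ _)
    (hnear.mono hbound)
end

section
/- (Causal recovery from minimal invariant risk.) In the linear SEM setting Y = βᵀX + N with squared-error loss and m environments, assume the risk E_N[N²] of β is the same in all environments, and that the system of equations in x ∈ ℝᵈ given by: 0 ≥ xᵀE_{X∼e₁}[XXᵀ]x + 2xᵀE_{N,X∼e₁}[NX] = xᵀE_{X∼e₂}[XXᵀ]x + 2xᵀE_{N,X∼e₂}[NX] = ⋯ = xᵀE_{X∼e_m}[XXᵀ]x + 2xᵀE_{N,X∼e_m}[NX] has x = 0 as its unique solution. If β̂ is a minimal invariant-risk predictor (its risk is equal across all m environments and is minimal among all coefficient vectors with equal risk across environments), then β̂ = β. -/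
open MeasureTheory

/-! Write `x = β - β̂`. The risk of `β̂` in environment `e` is `E_e[N²]` plus the excess risk
`xᵀE_e[XXᵀ]x + 2xᵀE_e[NX]`. Since `β` is itself invariant-risk with risk `E[N²]`, minimality of `β̂`
makes every excess risk nonpositive, and invariance of the risks of `β̂` and of `β` makes the excess
risks equal across environments. So `x` solves the system, hence `x = 0`. -/

section

variable {Ω ι : Type*} [MeasurableSpace Ω] [Fintype ι] (μ : Measure Ω)

theorem integral_add_sq {f g : Ω → ℝ} (hf : Integrable (fun ω => f ω ^ 2) μ)
    (hfg : Integrable (fun ω => f ω * g ω) μ) (hg : Integrable (fun ω => g ω ^ 2) μ) :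
    ∫ ω, (f ω + g ω) ^ 2 ∂μ
      = (∫ ω, f ω ^ 2 ∂μ + 2 * ∫ ω, f ω * g ω ∂μ) + ∫ ω, g ω ^ 2 ∂μ := by
  have hexpand : (fun ω => (f ω + g ω) ^ 2) = fun ω => (f ω ^ 2 + 2 * (f ω * g ω)) + g ω ^ 2 := by
    funext ω
    ring
  have hcross : Integrable (fun ω => 2 * (f ω * g ω)) μ := hfg.const_mul 2
  rw [hexpand, integral_add (f := fun ω => f ω ^ 2 + 2 * (f ω * g ω)) (hf.add hcross) hg,
    integral_add hf hcross, integral_const_mul]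

noncomputable def excessRisk (X : Ω → ι → ℝ) (N : Ω → ℝ) (x : ι → ℝ) : ℝ :=
  ∫ ω, (∑ i, x i * X ω i) ^ 2 ∂μ + 2 * ∫ ω, (∑ i, x i * X ω i) * N ω ∂μ

theorem integral_sq_sub_eq_excessRisk_add {X : Ω → ι → ℝ} {N : Ω → ℝ} {β b : ι → ℝ}
    (hX : Integrable (fun ω => (∑ i, (β - b) i * X ω i) ^ 2) μ)
    (hXN : Integrable (fun ω => (∑ i, (β - b) i * X ω i) * N ω) μ)
    (hN : Integrable (fun ω => N ω ^ 2) μ) :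
    ∫ ω, ((∑ i, β i * X ω i) + N ω - ∑ i, b i * X ω i) ^ 2 ∂μ
      = excessRisk μ X N (β - b) + ∫ ω, N ω ^ 2 ∂μ := by
  have hresidual : ∀ ω, (∑ i, β i * X ω i) + N ω - ∑ i, b i * X ω i
      = (∑ i, (β - b) i * X ω i) + N ω := by
    intro ω
    simp only [Pi.sub_apply, sub_mul, Finset.sum_sub_distrib]
    ring
  simp only [hresidual]
  exact integral_add_sq μ hX hXN hN

end

theorem causal_recovery_minimal_invariant_risk_general
    {d m : ℕ} {Ω : Type*} [MeasurableSpace Ω]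
    (μ : Fin m → Measure Ω)
    (X : Ω → Fin d → ℝ) (N : Ω → ℝ) (β βhat : Fin d → ℝ)
    (hint1 : ∀ (b : Fin d → ℝ) (e : Fin m),
      Integrable (fun ω => (∑ i, b i * X ω i) ^ 2) (μ e))
    (hint2 : ∀ (b : Fin d → ℝ) (e : Fin m),
      Integrable (fun ω => (∑ i, b i * X ω i) * N ω) (μ e))
    (hint3 : ∀ e : Fin m, Integrable (fun ω => (N ω) ^ 2) (μ e))
    -- the risk `E[N²]` of the causal predictor `β` is invariant across environments
    (hNinv : ∀ e e' : Fin m, ∫ ω, (N ω) ^ 2 ∂(μ e) = ∫ ω, (N ω) ^ 2 ∂(μ e'))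
    -- the system of equations has the unique solution `x = 0`
    (huniq : ∀ x : Fin d → ℝ,
      (∀ e e' : Fin m,
        (∫ ω, (∑ i, x i * X ω i) ^ 2 ∂(μ e))
            + 2 * (∫ ω, (∑ i, x i * X ω i) * N ω ∂(μ e))
          = (∫ ω, (∑ i, x i * X ω i) ^ 2 ∂(μ e'))
            + 2 * (∫ ω, (∑ i, x i * X ω i) * N ω ∂(μ e'))) →
      (∀ e : Fin m,
        (∫ ω, (∑ i, x i * X ω i) ^ 2 ∂(μ e))
            + 2 * (∫ ω, (∑ i, x i * X ω i) * N ω ∂(μ e)) ≤ 0) →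
      x = 0)
    -- `β̂` is an invariant-risk predictor
    (hinv : ∀ e e' : Fin m,
      ∫ ω, ((∑ i, β i * X ω i) + N ω - ∑ i, βhat i * X ω i) ^ 2 ∂(μ e)
        = ∫ ω, ((∑ i, β i * X ω i) + N ω - ∑ i, βhat i * X ω i) ^ 2 ∂(μ e'))
    -- `β̂` is minimal among invariant-risk predictors
    (hminimal : ∀ b : Fin d → ℝ,
      (∀ e e' : Fin m,
        ∫ ω, ((∑ i, β i * X ω i) + N ω - ∑ i, b i * X ω i) ^ 2 ∂(μ e)
          = ∫ ω, ((∑ i, β i * X ω i) + N ω - ∑ i, b i * X ω i) ^ 2 ∂(μ e')) →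
      ∀ e : Fin m,
        ∫ ω, ((∑ i, β i * X ω i) + N ω - ∑ i, βhat i * X ω i) ^ 2 ∂(μ e)
          ≤ ∫ ω, ((∑ i, β i * X ω i) + N ω - ∑ i, b i * X ω i) ^ 2 ∂(μ e)) :
    βhat = β := by
  have hrisk : ∀ e, ∫ ω, ((∑ i, β i * X ω i) + N ω - ∑ i, βhat i * X ω i) ^ 2 ∂(μ e)
      = excessRisk (μ e) X N (β - βhat) + ∫ ω, N ω ^ 2 ∂(μ e) := fun e =>
    integral_sq_sub_eq_excessRisk_add (μ e) (hint1 _ e) (hint2 _ e) (hint3 e)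
  have hβ_invariant : ∀ e e' : Fin m,
      ∫ ω, ((∑ i, β i * X ω i) + N ω - ∑ i, β i * X ω i) ^ 2 ∂(μ e)
        = ∫ ω, ((∑ i, β i * X ω i) + N ω - ∑ i, β i * X ω i) ^ 2 ∂(μ e') := by
    simpa only [add_sub_cancel_left] using hNinv
  have hnonpos : ∀ e, excessRisk (μ e) X N (β - βhat) ≤ 0 := fun e => by
    have hle := hminimal β hβ_invariant e
    simp only [hrisk e, add_sub_cancel_left] at hle
    linarith
  have hconst : ∀ e e', excessRisk (μ e) X N (β - βhat) = excessRisk (μ e') X N (β - βhat) :=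
    fun e e' => by
      have hrisk_eq := hinv e e'
      rw [hrisk e, hrisk e'] at hrisk_eq
      linarith [hNinv e e']
  exact (sub_eq_zero.mp (huniq _ hconst hnonpos)).symm

/-- Causal recovery from minimal invariant risk: in the linear SEM
`Y = βᵀX + N` over `m` environments with squared-error loss, if the risk
`E[N²]` of `β` is the same in all environments and the system
`0 ≥ xᵀE_{e₁}[XXᵀ]x + 2xᵀE_{e₁}[NX] = ⋯ = xᵀE_{e_m}[XXᵀ]x + 2xᵀE_{e_m}[NX]`
has `x = 0` as its unique solution, then any minimal invariant-risk predictor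
`β̂` (equal risk across environments, minimal among such) equals `β`. -/
theorem causal_recovery_minimal_invariant_risk
    {d m : ℕ} (hm : 0 < m) {Ω : Type*} [MeasurableSpace Ω]
    (μ : Fin m → Measure Ω) (hprob : ∀ e, IsProbabilityMeasure (μ e))
    (X : Ω → Fin d → ℝ) (N : Ω → ℝ) (β βhat : Fin d → ℝ)
    (hint1 : ∀ (b : Fin d → ℝ) (e : Fin m),
      Integrable (fun ω => (∑ i, b i * X ω i) ^ 2) (μ e))
    (hint2 : ∀ (b : Fin d → ℝ) (e : Fin m),
      Integrable (fun ω => (∑ i, b i * X ω i) * N ω) (μ e))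
    (hint3 : ∀ e : Fin m, Integrable (fun ω => (N ω) ^ 2) (μ e))
    -- the risk `E[N²]` of the causal predictor `β` is invariant across environments
    (hNinv : ∀ e e' : Fin m, ∫ ω, (N ω) ^ 2 ∂(μ e) = ∫ ω, (N ω) ^ 2 ∂(μ e'))
    -- the system of equations has the unique solution `x = 0`
    (huniq : ∀ x : Fin d → ℝ,
      (∀ e e' : Fin m,
        (∫ ω, (∑ i, x i * X ω i) ^ 2 ∂(μ e))
            + 2 * (∫ ω, (∑ i, x i * X ω i) * N ω ∂(μ e))
          = (∫ ω, (∑ i, x i * X ω i) ^ 2 ∂(μ e'))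
            + 2 * (∫ ω, (∑ i, x i * X ω i) * N ω ∂(μ e'))) →
      (∀ e : Fin m,
        (∫ ω, (∑ i, x i * X ω i) ^ 2 ∂(μ e))
            + 2 * (∫ ω, (∑ i, x i * X ω i) * N ω ∂(μ e)) ≤ 0) →
      x = 0)
    -- `β̂` is an invariant-risk predictor
    (hinv : ∀ e e' : Fin m,
      ∫ ω, ((∑ i, β i * X ω i) + N ω - ∑ i, βhat i * X ω i) ^ 2 ∂(μ e)
        = ∫ ω, ((∑ i, β i * X ω i) + N ω - ∑ i, βhat i * X ω i) ^ 2 ∂(μ e'))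
    -- `β̂` is minimal among invariant-risk predictors
    (hminimal : ∀ b : Fin d → ℝ,
      (∀ e e' : Fin m,
        ∫ ω, ((∑ i, β i * X ω i) + N ω - ∑ i, b i * X ω i) ^ 2 ∂(μ e)
          = ∫ ω, ((∑ i, β i * X ω i) + N ω - ∑ i, b i * X ω i) ^ 2 ∂(μ e')) →
      ∀ e : Fin m,
        ∫ ω, ((∑ i, β i * X ω i) + N ω - ∑ i, βhat i * X ω i) ^ 2 ∂(μ e)
          ≤ ∫ ω, ((∑ i, β i * X ω i) + N ω - ∑ i, b i * X ω i) ^ 2 ∂(μ e)) :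
    βhat = β :=
  causal_recovery_minimal_invariant_risk_general μ X N β βhat hint1 hint2 hint3 hNinv huniq hinv
    hminimal
end

section
/- (KDE bias bound under Hölder smoothness.) Let F : ℝ → [0,1] be a CDF with density p, and suppose the ⌊β⌋-th derivative of F is (β − ⌊β⌋)-Hölder continuous with constant L, for β > 0. Let K : ℝ → ℝ satisfy ∫|K| < ∞, ∫K = 1, ∫|u|^β|K(u)|du < ∞, and ∫uʲK(u)du = 0 for all integers 1 ≤ j < β. Then for the expected KDE-smoothed CDF F_h(t) := ∫K(x)·F(t + xh)dx and all t ∈ ℝ, h > 0: |F(t) − F_h(t)| ≤ C·h^β, where C = (L/⌊β⌋!)·∫|x|^β|K(x)|dx. -/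
open MeasureTheory

open Finset in
lemma idw {n j : ℕ} {g : ℝ → ℝ} (hg : ContDiff ℝ n g) (hj : j ≤ n)
    {s : Set ℝ} (hs : UniqueDiffOn ℝ s) {x : ℝ} (hx : x ∈ s) :
    iteratedDerivWithin j g s x = iteratedDeriv j g x := by
  have h : HasFTaylorSeriesUpTo n g (ftaylorSeries ℝ g) :=
    contDiff_iff_ftaylorSeries.mp hg
  have h2 := (h.hasFTaylorSeriesUpToOn s).eq_iteratedFDerivWithin_of_uniqueDiffOn
    (by exact_mod_cast hj) hs hx
  have h3 := h.eq_iteratedFDeriv (by exact_mod_cast hj) x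
  rw [iteratedDerivWithin_eq_iteratedFDerivWithin, iteratedDeriv_eq_iteratedFDeriv, ← h2, ← h3]

lemma taylor_aux {m : ℕ} (hm : 1 ≤ m) {F : ℝ → ℝ} (hF : ContDiff ℝ m F) (t s : ℝ) :
    ∃ ξ : ℝ, |ξ - t| ≤ |s| ∧
      F (t + s) - ∑ j ∈ Finset.range m, iteratedDeriv j F t * s ^ j / j.factorial
        = iteratedDeriv m F ξ * s ^ m / m.factorial := by
  set g : ℝ → ℝ := fun x => F (t + s * x) with hg
  have hgC : ContDiff ℝ m g := by
    have : ContDiff ℝ m (fun x : ℝ => t + s * x) :=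
      contDiff_const.add (contDiff_id.const_smul s)
    exact hF.comp this
  have hgd : ∀ j : ℕ, j ≤ m → ∀ x : ℝ,
      iteratedDeriv j g x = s ^ j * iteratedDeriv j F (t + s * x) := by
    intro j hj x
    have h1 : ContDiff ℝ j (fun y : ℝ => F (t + y)) :=
      (hF.of_le (by exact_mod_cast hj)).comp (contDiff_const.add contDiff_id)
    have h2 := iteratedDeriv_comp_const_mul h1 s
    have h3 : iteratedDeriv j (fun y : ℝ => F (t + y)) = fun y => iteratedDeriv j F (t + y) :=
      iteratedDeriv_comp_const_add j F t
    calc iteratedDeriv j g x = iteratedDeriv j (fun x => (fun y : ℝ => F (t + y)) (s * x)) x := rfl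
      _ = s ^ j * iteratedDeriv j (fun y : ℝ => F (t + y)) (s * x) := by rw [h2]
      _ = s ^ j * iteratedDeriv j F (t + s * x) := by rw [h3]
  have hud : UniqueDiffOn ℝ (Set.Icc (0:ℝ) 1) := uniqueDiffOn_Icc one_pos
  have hcd : ContDiffOn ℝ (m - 1 : ℕ) g (Set.Icc (0:ℝ) 1) :=
    (hgC.of_le (by exact_mod_cast Nat.sub_le m 1)).contDiffOn
  have hdiff : DifferentiableOn ℝ (iteratedDerivWithin (m-1) g (Set.Icc (0:ℝ) 1))
      (Set.Ioo (0:ℝ) 1) := by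
    apply DifferentiableOn.congr
      (f := iteratedDeriv (m-1) g)
    · exact ((hgC.differentiable_iteratedDeriv (m-1)
        (by exact_mod_cast Nat.sub_lt hm one_pos)).differentiableOn)
    · intro x hx
      exact idw hgC (Nat.sub_le m 1) hud (Set.mem_Icc_of_Ioo hx)
  obtain ⟨x', hx', hx'eq⟩ := taylor_mean_remainder_lagrange (f := g) (x₀ := 0) (x := 1)
    one_pos.ne (by rwa [Set.uIcc_of_le zero_le_one])
    (by rwa [Set.uIcc_of_le zero_le_one, Set.uIoo_of_le zero_le_one])
  rw [Set.uIcc_of_le zero_le_one] at hx'eq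
  rw [Set.uIoo_of_le zero_le_one] at hx'
  rw [Nat.sub_add_cancel hm] at hx'eq
  refine ⟨t + s * x', ?_, ?_⟩
  · have : |t + s * x' - t| = |s| * |x'| := by rw [add_sub_cancel_left, abs_mul]
    rw [this]
    have hx1 : |x'| ≤ 1 := by rw [abs_of_pos hx'.1]; exact hx'.2.le
    exact mul_le_of_le_one_right (abs_nonneg s) hx1 |>.trans le_rfl
  · have hts : taylorWithinEval g (m-1) (Set.Icc (0:ℝ) 1) 0 1
        = ∑ j ∈ Finset.range m, iteratedDeriv j F t * s ^ j / j.factorial := by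
      rw [taylor_within_apply]
      rw [Nat.sub_add_cancel hm]
      apply Finset.sum_congr rfl
      intro j hj
      have hjm : j ≤ m := le_of_lt (Finset.mem_range.mp hj)
      rw [idw hgC hjm hud (Set.left_mem_Icc.mpr zero_le_one), hgd j hjm]
      simp only [smul_eq_mul, sub_zero, one_pow, mul_one, mul_zero, add_zero]
      ring
    have hg1 : g 1 = F (t + s) := by simp [hg]
    have hgm : iteratedDerivWithin m g (Set.Icc (0:ℝ) 1) x'
        = s ^ m * iteratedDeriv m F (t + s * x') := by
      rw [idw hgC le_rfl hud (Set.mem_Icc_of_Ioo hx'), hgd m le_rfl]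
    rw [hts, hg1, hgm] at hx'eq
    rw [hx'eq]; ring

open Finset in
lemma unbdd_aux {m : ℕ} (hm : 1 ≤ m) {G : ℝ → ℝ} (hG : ContDiff ℝ m G) {B c : ℝ}
    (hB : ∀ x, G x ≤ B) (hc : 0 < c) (hd : ∀ x, c ≤ iteratedDeriv m G x) : False := by
  set A : ℝ := ∑ j ∈ Finset.range m, |iteratedDeriv j G 0| / j.factorial with hA
  have hA0 : 0 ≤ A := Finset.sum_nonneg fun j _ => by positivity
  set s : ℝ := max 1 (m.factorial * (A + |B| + 1) / c) with hsdef
  have hs1 : (1:ℝ) ≤ s := le_max_left _ _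
  have hs0 : 0 < s := lt_of_lt_of_le one_pos hs1
  obtain ⟨ξ, _, heq⟩ := taylor_aux hm hG 0 s
  have hsum : -(A * s ^ (m-1)) ≤ ∑ j ∈ Finset.range m, iteratedDeriv j G 0 * s ^ j / j.factorial := by
    have key : ∀ j ∈ Finset.range m, -(|iteratedDeriv j G 0| / j.factorial * s ^ (m-1))
        ≤ iteratedDeriv j G 0 * s ^ j / j.factorial := by
      intro j hj
      have hjm : j ≤ m - 1 := Nat.le_sub_one_of_lt (Finset.mem_range.mp hj)
      have hpow : s ^ j ≤ s ^ (m-1) := pow_le_pow_right₀ hs1 hjm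
      have hpow0 : (0:ℝ) < s ^ j := pow_pos hs0 j
      have hf0 : (0:ℝ) < j.factorial := by exact_mod_cast j.factorial_pos
      set d := iteratedDeriv j G 0
      have habs : |d * s ^ j / j.factorial| = |d| / j.factorial * s ^ j := by
        rw [abs_div, abs_mul, abs_of_pos hpow0, abs_of_pos hf0]; ring
      have h1 : -(|d| / j.factorial * s ^ j) ≤ d * s ^ j / j.factorial := by
        rw [← habs]; exact neg_abs_le _
      have h2 : |d| / j.factorial * s ^ j ≤ |d| / j.factorial * s ^ (m-1) := by
        have : (0:ℝ) ≤ |d| / j.factorial := by positivity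
        nlinarith
      linarith
    calc -(A * s ^ (m-1))
        = ∑ j ∈ Finset.range m, -(|iteratedDeriv j G 0| / j.factorial * s ^ (m-1)) := by
          rw [hA, Finset.sum_mul, ← Finset.sum_neg_distrib]
      _ ≤ _ := Finset.sum_le_sum key
  have hf0 : (0:ℝ) < m.factorial := by exact_mod_cast m.factorial_pos
  have hsm : s ^ m = s * s ^ (m - 1) := by
    have h := pow_succ s (m-1)
    rw [Nat.sub_add_cancel hm] at h
    rw [h]; ring
  have hrem : (A + |B| + 1) * s ^ (m-1) ≤ iteratedDeriv m G ξ * s ^ m / m.factorial := by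
    have hcs : (m.factorial : ℝ) * (A + |B| + 1) / c ≤ s := le_max_right _ _
    have h1 : (m.factorial : ℝ) * (A + |B| + 1) ≤ c * s := by
      rw [div_le_iff₀ hc] at hcs; linarith
    have h2 : c * s ^ m ≤ iteratedDeriv m G ξ * s ^ m := by
      have := hd ξ; nlinarith [pow_pos hs0 m]
    have hsm1 : (0:ℝ) < s ^ (m-1) := pow_pos hs0 _
    rw [le_div_iff₀ hf0]
    calc (A + |B| + 1) * s ^ (m-1) * m.factorial
        = ((m.factorial : ℝ) * (A + |B| + 1)) * s ^ (m-1) := by ring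
      _ ≤ (c * s) * s ^ (m-1) := by nlinarith
      _ = c * s ^ m := by rw [hsm]; ring
      _ ≤ _ := h2
  have hGs : G s = (∑ j ∈ Finset.range m, iteratedDeriv j G 0 * s ^ j / j.factorial)
      + iteratedDeriv m G ξ * s ^ m / m.factorial := by
    rw [zero_add] at heq; linarith
  have hsm1 : (1:ℝ) ≤ s ^ (m-1) := one_le_pow₀ hs1
  have hfin : |B| + 1 ≤ G s := by
    rw [hGs]
    nlinarith [hsum, hrem, hsm1, abs_nonneg B]
  have := hB s
  have := le_abs_self B
  linarith

open Finset in
lemma kde_integral_step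
    (β C : ℝ) (hβ : 0 < β) (hC : 0 ≤ C)
    (K : ℝ → ℝ) (hKint : Integrable K) (hK1 : (∫ u, K u) = 1)
    (hKmom : Integrable (fun u => |u| ^ β * |K u|))
    (hKvanish : ∀ j : ℕ, 1 ≤ j → (j : ℝ) < β → (∫ u, (u : ℝ) ^ j * K u) = 0)
    (F : ℝ → ℝ) (hFc : Continuous F)
    (n : ℕ) (hn : (n : ℝ) < β)
    (a : ℕ → ℝ) (t : ℝ) (ha0 : a 0 = F t)
    (key : ∀ s : ℝ, |F (t + s) - ∑ j ∈ Finset.range (n+1), a j * s ^ j| ≤ C * |s| ^ β)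
    (h : ℝ) (hh : 0 < h) :
    |F t - ∫ x, K x * F (t + x * h)| ≤ C * (∫ x, |x| ^ β * |K x|) * h ^ β := by
  have hKmeas := hKint.aestronglyMeasurable
  have habs_int : Integrable (fun x : ℝ => |K x| + |x| ^ β * |K x|) := hKint.abs.add hKmom
  have hxj : ∀ j : ℕ, j ≤ n → Integrable (fun x : ℝ => x ^ j * K x) := by
    intro j hj
    apply habs_int.mono ((continuous_pow j).aestronglyMeasurable.mul hKmeas)
    filter_upwards with x
    show ‖x ^ j * K x‖ ≤ ‖|K x| + |x| ^ β * |K x|‖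
    have h1 : ‖x ^ j * K x‖ = |x| ^ j * |K x| := by
      rw [Real.norm_eq_abs, abs_mul, abs_pow]
    have h2 : ‖|K x| + |x| ^ β * |K x|‖ = |K x| + |x| ^ β * |K x| := by
      rw [Real.norm_eq_abs, abs_of_nonneg]
      positivity
    rw [h1, h2]
    rcases le_or_gt (|x|) 1 with hx | hx
    · have : |x| ^ j ≤ 1 := pow_le_one₀ (abs_nonneg x) hx
      nlinarith [abs_nonneg (K x), Real.rpow_nonneg (abs_nonneg x) β]
    · have h3 : |x| ^ j = |x| ^ (j : ℝ) := (Real.rpow_natCast _ j).symm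
      have h4 : |x| ^ (j:ℝ) ≤ |x| ^ β := by
        apply Real.rpow_le_rpow_of_exponent_le hx.le
        exact le_of_lt (lt_of_le_of_lt (by exact_mod_cast hj) hn)
      rw [h3]
      nlinarith [abs_nonneg (K x), Real.rpow_nonneg (abs_nonneg x) (j:ℝ)]
  set P : ℝ → ℝ := fun x => ∑ j ∈ Finset.range (n+1), a j * (x * h) ^ j with hP
  have hPc : Continuous P := by fun_prop
  have hKPeq : (fun x => K x * P x)
      = fun x => ∑ j ∈ Finset.range (n+1), (a j * h ^ j) * (x ^ j * K x) := by
    funext x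
    rw [hP, Finset.mul_sum]
    apply Finset.sum_congr rfl
    intro j _
    rw [mul_pow]; ring
  have hKP : Integrable (fun x => K x * P x) := by
    rw [hKPeq]
    apply integrable_finset_sum
    intro j hj
    exact ((hxj j (Nat.lt_succ_iff.mp (Finset.mem_range.mp hj))).const_mul _)
  have hbound : ∀ x : ℝ, |K x * (F (t + x * h) - P x)| ≤ C * h ^ β * (|x| ^ β * |K x|) := by
    intro x
    have hk := key (x * h)
    have habs : |x * h| = |x| * h := by rw [abs_mul, abs_of_pos hh]
    have hpow : |x * h| ^ β = |x| ^ β * h ^ β := by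
      rw [habs, Real.mul_rpow (abs_nonneg x) hh.le]
    rw [abs_mul]
    calc |K x| * |F (t + x * h) - P x| ≤ |K x| * (C * (|x| ^ β * h ^ β)) := by
          apply mul_le_mul_of_nonneg_left _ (abs_nonneg _)
          rw [← hpow]; exact hk
      _ = C * h ^ β * (|x| ^ β * |K x|) := by ring
  have hKR : Integrable (fun x => K x * (F (t + x * h) - P x)) := by
    apply Integrable.mono' (hKmom.const_mul (C * h ^ β))
    · exact hKmeas.mul ((hFc.comp (by fun_prop)).aestronglyMeasurable.sub hPc.aestronglyMeasurable)
    · filter_upwards with x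
      rw [Real.norm_eq_abs]
      exact hbound x
  have hKFeq : (fun x => K x * F (t + x * h))
      = fun x => K x * P x + K x * (F (t + x * h) - P x) := by
    funext x; ring
  have hKF : Integrable (fun x => K x * F (t + x * h)) := by
    rw [hKFeq]; exact hKP.add hKR
  have hsplit : (∫ x, K x * F (t + x * h))
      = (∫ x, K x * P x) + ∫ x, K x * (F (t + x * h) - P x) := by
    rw [hKFeq]; exact integral_add hKP hKR
  have hKPint : (∫ x, K x * P x) = F t := by
    rw [hKPeq, integral_finset_sum _ (fun j hj =>
      ((hxj j (Nat.lt_succ_iff.mp (Finset.mem_range.mp hj))).const_mul _))]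
    have : ∀ j ∈ Finset.range (n+1),
        (∫ x, (a j * h ^ j) * (x ^ j * K x)) = if j = 0 then F t else 0 := by
      intro j hj
      rw [integral_const_mul]
      rcases Nat.eq_zero_or_pos j with rfl | hj1
      · simp [hK1, ha0]
      · rw [if_neg (Nat.pos_iff_ne_zero.mp hj1)]
        rw [hKvanish j hj1 (lt_of_le_of_lt
          (by exact_mod_cast Nat.lt_succ_iff.mp (Finset.mem_range.mp hj)) hn), mul_zero]
    rw [Finset.sum_congr rfl this, Finset.sum_ite_eq' (Finset.range (n+1)) 0 (fun _ => F t)]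
    simp
  have hfinal : |F t - ∫ x, K x * F (t + x * h)|
      = |∫ x, K x * (F (t + x * h) - P x)| := by
    rw [hsplit, hKPint, abs_sub_comm]
    congr 1; ring
  rw [hfinal]
  calc |∫ x, K x * (F (t + x * h) - P x)|
      ≤ ∫ x, |K x| * |F (t + x * h) - P x| := by
        simpa [Real.norm_eq_abs, abs_mul] using
          norm_integral_le_integral_norm (μ := volume) (fun x => K x * (F (t + x * h) - P x))
    _ ≤ ∫ x, C * h ^ β * (|x| ^ β * |K x|) := by
        apply integral_mono (by simpa [abs_mul] using hKR.abs) (hKmom.const_mul _)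
        intro x
        simpa [abs_mul] using hbound x
    _ = C * h ^ β * ∫ x, |x| ^ β * |K x| := integral_const_mul _ _
    _ = C * (∫ x, |x| ^ β * |K x|) * h ^ β := by ring

/-- KDE bias bound under Hölder smoothness: if `F : ℝ → [0,1]` is a CDF whose
`⌊β⌋`-th derivative is `(β − ⌊β⌋)`-Hölder with constant `L`, and the kernel `K`
integrates to `1`, has finite `β`-th absolute moment, and vanishing `j`-th
moments for integers `1 ≤ j < β`, then the expected KDE-smoothed CDF
`F_h(t) = ∫ K(x)·F(t + xh) dx` satisfies `|F(t) − F_h(t)| ≤ C·h^β` with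
`C = (L/⌊β⌋!)·∫|x|^β|K(x)|dx`. -/
theorem kde_bias_bound
    (β L : ℝ) (hβ : 0 < β) (hL : 0 ≤ L)
    (F : ℝ → ℝ) (hF01 : ∀ t, F t ∈ Set.Icc (0:ℝ) 1) (hFmono : Monotone F)
    (hFdiff : ContDiff ℝ (⌊β⌋₊) F)
    (hHolder : ∀ s t : ℝ,
      |iteratedDeriv ⌊β⌋₊ F s - iteratedDeriv ⌊β⌋₊ F t|
        ≤ L * |s - t| ^ (β - (⌊β⌋₊ : ℝ)))
    (K : ℝ → ℝ) (hKint : Integrable K) (hK1 : (∫ u, K u) = 1)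
    (hKmom : Integrable (fun u => |u| ^ β * |K u|))
    (hKvanish : ∀ j : ℕ, 1 ≤ j → (j : ℝ) < β → (∫ u, (u : ℝ) ^ j * K u) = 0) :
    ∀ (t h : ℝ), 0 < h →
      |F t - ∫ x, K x * F (t + x * h)|
        ≤ (L / (Nat.factorial ⌊β⌋₊)) * (∫ x, |x| ^ β * |K x|) * h ^ β := by
  intro t h hh
  set m : ℕ := ⌊β⌋₊ with hmdef
  set C : ℝ := L / (Nat.factorial m : ℝ) with hCdef
  have hfpos : (0:ℝ) < (Nat.factorial m : ℝ) := by exact_mod_cast m.factorial_pos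
  have hC : 0 ≤ C := by positivity
  have hFc : Continuous F := hFdiff.continuous
  set a : ℕ → ℝ := fun j => iteratedDeriv j F t / j.factorial with hadef
  have ha0 : a 0 = F t := by simp [hadef]
  have hfl : (m : ℝ) ≤ β := Nat.floor_le hβ.le
  rcases eq_or_lt_of_le hfl with heq | hlt
  · -- integer case : (m : ℝ) = β
    have hm : 1 ≤ m := by
      rcases Nat.eq_zero_or_pos m with h0 | h1
      · exfalso; rw [h0] at heq; simp at heq; linarith
      · exact h1
    have hexp : β - (m : ℝ) = 0 := by linarith
    have hHolder' : ∀ s u : ℝ, |iteratedDeriv m F s - iteratedDeriv m F u| ≤ L := by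
      intro s u
      have := hHolder s u
      rwa [hexp, Real.rpow_zero, mul_one] at this
    have hsup : ∀ x, |iteratedDeriv m F x| ≤ L := by
      intro x
      by_contra hcon
      push_neg at hcon
      rcases lt_or_ge L (iteratedDeriv m F x) with hpos | hneg
      · exact unbdd_aux hm hFdiff (fun y => (hF01 y).2)
          (c := iteratedDeriv m F x - L) (by linarith)
          (fun y => by
            have := hHolder' x y
            have h2 := abs_le.mp this
            linarith [h2.1, h2.2])
      · have hneg2 : iteratedDeriv m F x < -L := by
          rcases lt_abs.mp hcon with h1 | h1
          · linarith
          · linarith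
        refine unbdd_aux hm (G := fun y => -(F y)) (hFdiff.neg)
          (fun y => neg_nonpos.mpr (hF01 y).1)
          (c := -(iteratedDeriv m F x) - L) (by linarith) (fun y => ?_)
        rw [show (fun y => -F y) = -F from rfl, iteratedDeriv_neg]
        have h2 := abs_le.mp (hHolder' y x)
        linarith [h2.1, h2.2]
    have hn : ((m - 1 : ℕ) : ℝ) < β := by
      rw [← heq]
      exact_mod_cast Nat.sub_lt hm one_pos
    have key : ∀ s : ℝ,
        |F (t + s) - ∑ j ∈ Finset.range ((m-1)+1), a j * s ^ j| ≤ C * |s| ^ β := by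
      intro s
      rw [Nat.sub_add_cancel hm]
      have hsum : ∑ j ∈ Finset.range m, a j * s ^ j
          = ∑ j ∈ Finset.range m, iteratedDeriv j F t * s ^ j / j.factorial := by
        apply Finset.sum_congr rfl; intro j _; rw [hadef]; ring
      obtain ⟨ξ, hξ, heq2⟩ := taylor_aux hm hFdiff t s
      rw [hsum, heq2]
      have h1 : |iteratedDeriv m F ξ * s ^ m / m.factorial|
          = |iteratedDeriv m F ξ| * |s| ^ m / m.factorial := by
        rw [abs_div, abs_mul, abs_pow, abs_of_pos hfpos]
      have h2 : |s| ^ m = |s| ^ β := by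
        rw [← heq, ← Real.rpow_natCast |s| m]
      rw [h1, h2]
      rw [hCdef, div_mul_eq_mul_div, div_le_div_iff_of_pos_right hfpos]
      exact mul_le_mul_of_nonneg_right (hsup ξ) (Real.rpow_nonneg (abs_nonneg s) β)
    exact kde_integral_step β C hβ hC K hKint hK1 hKmom hKvanish F hFc (m-1) hn a t ha0 key h hh
  · -- non-integer-type case : (m : ℝ) < β
    rcases Nat.eq_zero_or_pos m with hm0 | hm
    · -- m = 0
      have key : ∀ s : ℝ,
          |F (t + s) - ∑ j ∈ Finset.range (0+1), a j * s ^ j| ≤ C * |s| ^ β := by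
        intro s
        have hth := hHolder (t + s) t
        rw [hm0] at hth
        simp only [iteratedDeriv_zero, Nat.cast_zero, sub_zero, add_sub_cancel_left] at hth
        have hCL : C = L := by rw [hCdef, hm0]; norm_num
        simpa [Finset.sum_range_one, ha0, hCL] using hth
      have hn0 : ((0:ℕ):ℝ) < β := by exact_mod_cast hβ
      have := kde_integral_step β C hβ hC K hKint hK1 hKmom hKvanish F hFc 0 hn0 a t ha0 key h hh
      exact this
    · -- m ≥ 1
      have key : ∀ s : ℝ,
          |F (t + s) - ∑ j ∈ Finset.range (m+1), a j * s ^ j| ≤ C * |s| ^ β := by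
        intro s
        by_cases hs : s = 0
        · subst hs
          have hsum : ∑ j ∈ Finset.range (m+1), a j * (0:ℝ) ^ j = a 0 := by
            rw [Finset.sum_eq_single 0]
            · simp
            · intro b _ hb; simp [zero_pow hb]
            · intro hcon; simp at hcon
          simp [hsum, ha0, Real.zero_rpow hβ.ne']
        · obtain ⟨ξ, hξ, heq2⟩ := taylor_aux hm hFdiff t s
          have hsum : ∑ j ∈ Finset.range (m+1), a j * s ^ j
              = (∑ j ∈ Finset.range m, iteratedDeriv j F t * s ^ j / j.factorial)
                + iteratedDeriv m F t * s ^ m / m.factorial := by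
            rw [Finset.sum_range_succ]
            congr 1
            · apply Finset.sum_congr rfl; intro j _; rw [hadef]; ring
            · rw [hadef]; ring
          have heq3 : F (t + s) - ∑ j ∈ Finset.range (m+1), a j * s ^ j
              = (iteratedDeriv m F ξ - iteratedDeriv m F t) * s ^ m / m.factorial := by
            rw [hsum]
            have : F (t + s) - ((∑ j ∈ Finset.range m, iteratedDeriv j F t * s ^ j / j.factorial)
                + iteratedDeriv m F t * s ^ m / m.factorial)
                = (F (t + s) - ∑ j ∈ Finset.range m, iteratedDeriv j F t * s ^ j / j.factorial)
                  - iteratedDeriv m F t * s ^ m / m.factorial := by ring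
            rw [this, heq2]; ring
          rw [heq3]
          have habs : |(iteratedDeriv m F ξ - iteratedDeriv m F t) * s ^ m / m.factorial|
              = |iteratedDeriv m F ξ - iteratedDeriv m F t| * |s| ^ m / m.factorial := by
            rw [abs_div, abs_mul, abs_pow, abs_of_pos hfpos]
          rw [habs]
          have hH := hHolder ξ t
          have hmono : |ξ - t| ^ (β - (m:ℝ)) ≤ |s| ^ (β - (m:ℝ)) :=
            Real.rpow_le_rpow (abs_nonneg _) hξ (by linarith)
          have hcomb : |s| ^ (β - (m:ℝ)) * |s| ^ m = |s| ^ β := by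
            rw [← Real.rpow_natCast |s| m, ← Real.rpow_add (abs_pos.mpr hs), sub_add_cancel]
          rw [hCdef, div_mul_eq_mul_div, div_le_div_iff_of_pos_right hfpos, ← hcomb]
          have hpm : (0:ℝ) ≤ |s| ^ m := pow_nonneg (abs_nonneg s) m
          calc |iteratedDeriv m F ξ - iteratedDeriv m F t| * |s| ^ m
              ≤ (L * |ξ - t| ^ (β - (m:ℝ))) * |s| ^ m :=
                mul_le_mul_of_nonneg_right hH hpm
            _ ≤ (L * |s| ^ (β - (m:ℝ))) * |s| ^ m := by
                apply mul_le_mul_of_nonneg_right _ hpm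
                exact mul_le_mul_of_nonneg_left hmono hL
            _ = L * (|s| ^ (β - (m:ℝ)) * |s| ^ m) := by ring
      exact kde_integral_step β C hβ hC K hKint hK1 hKmom hKvanish F hFc m
        (by exact_mod_cast hlt) a t ha0 key h hh
end

section
/- (Dual representation of the superquantile/CVaR.) Let R be a real-valued random variable on a probability space with distribution T, with R ∈ L^p for some p ∈ (1, ∞), and let α ∈ (0, 1). Then CVaR_α(R) := min_{t ∈ ℝ} { t + (1/(1−α))·E[(R − t)₊] } equals the supremum over densities U (measurable, 0 ≤ U ≤ 1/(1−α) T-a.e., E_T[U] = 1) of E_T[R·U]. -/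
open MeasureTheory Set Filter ProbabilityTheory Function
open scoped ENNReal Topology

lemma quantile_exists (T : Measure ℝ) [IsProbabilityMeasure T] (α : ℝ)
    (hα : α ∈ Set.Ioo (0:ℝ) 1) :
    ∃ q a b : ℝ, b ≤ α ∧ α ≤ a ∧ a ≤ 1 ∧ 0 ≤ b ∧
      T (Set.Ioi q) = ENNReal.ofReal (1 - a) ∧ T {q} = ENNReal.ofReal (a - b) := by
  set F := cdf T with hF
  set A : Set ℝ := {x | α ≤ F x} with hA
  -- A nonempty
  have hne : A.Nonempty := by
    have := tendsto_cdf_atTop T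
    have h1 : ∀ᶠ x in atTop, α < F x := this.eventually_const_lt hα.2
    obtain ⟨x, hx⟩ := h1.exists
    exact ⟨x, hx.le⟩
  -- A bounded below
  have hbdd : BddBelow A := by
    have := tendsto_cdf_atBot T
    have h1 : ∀ᶠ x in atBot, F x < α := this.eventually_lt_const hα.1
    obtain ⟨x0, hx0⟩ := h1.exists
    refine ⟨x0, fun y hy => ?_⟩
    by_contra h
    push_neg at h
    exact absurd (le_trans hy (monotone_cdf T h.le)) (not_le.mpr hx0)
  set q := sInf A with hq
  have haq : α ≤ F q := by
    have hrc : ContinuousWithinAt F (Set.Ici q) q := (cdf T).right_continuous q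
    have hrc' : Tendsto F (𝓝[>] q) (𝓝 (F q)) :=
      hrc.tendsto.mono_left (nhdsWithin_mono q Ioi_subset_Ici_self)
    refine ge_of_tendsto hrc' ?_
    filter_upwards [self_mem_nhdsWithin] with x hx
    obtain ⟨y, hyA, hyx⟩ := (csInf_lt_iff hbdd hne).mp hx
    exact le_trans hyA (monotone_cdf T hyx.le)
  have hbq : leftLim F q ≤ α := by
    have hlt : Tendsto F (𝓝[<] q) (𝓝 (leftLim F q)) := (cdf T).mono.tendsto_leftLim q
    refine le_of_tendsto hlt ?_
    filter_upwards [self_mem_nhdsWithin] with x hx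
    by_contra h
    push_neg at h
    exact absurd (csInf_le hbdd (le_of_lt h : α ≤ F x)) (not_le.mpr hx)
  refine ⟨q, F q, leftLim F q, hbq, haq, cdf_le_one T q, ?_, ?_, ?_⟩
  · exact le_trans (cdf_nonneg T (q-1)) ((cdf T).mono.le_leftLim (by linarith))
  · have hIic : T (Set.Iic q) = ENNReal.ofReal (F q) := (ofReal_cdf T q).symm
    have : T (Set.Ioi q) = T Set.univ - T (Set.Iic q) := by
      rw [← Set.compl_Iic]
      exact measure_compl measurableSet_Iic (measure_ne_top T _)
    rw [this, measure_univ, hIic, ENNReal.ofReal_sub 1 (cdf_nonneg T q), ENNReal.ofReal_one]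
  · rw [show T = (cdf T).measure from (measure_cdf T).symm]
    exact (cdf T).measure_singleton q



lemma maxpos_integrable (T : Measure ℝ) [IsProbabilityMeasure T]
    (hX : Integrable (fun x : ℝ => x) T) (t : ℝ) :
    Integrable (fun x : ℝ => max (x - t) 0) T :=
  (hX.sub (integrable_const t)).pos_part

lemma mulU_integrable (T : Measure ℝ) [IsProbabilityMeasure T]
    (hX : Integrable (fun x : ℝ => x) T) {β : ℝ} (U : ℝ → ℝ) (hU : Measurable U)
    (hUb : ∀ᵐ x ∂T, 0 ≤ U x ∧ U x ≤ β) :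
    Integrable (fun x : ℝ => x * U x) T := by
  refine Integrable.mono' (hX.abs.const_mul β) ((measurable_id.mul hU).aestronglyMeasurable) ?_
  filter_upwards [hUb] with x ⟨h0, h1⟩
  rw [Real.norm_eq_abs, abs_mul]
  have : |U x| ≤ β := by rw [abs_of_nonneg h0]; exact h1
  calc |x| * |U x| ≤ |x| * β := mul_le_mul_of_nonneg_left this (abs_nonneg x)
  _ = β * |x| := mul_comm _ _

lemma U_integrable (T : Measure ℝ) [IsProbabilityMeasure T]
    {β : ℝ} (U : ℝ → ℝ) (hU : Measurable U)
    (hUb : ∀ᵐ x ∂T, 0 ≤ U x ∧ U x ≤ β) : Integrable U T := by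
  refine Integrable.mono' (integrable_const β) hU.aestronglyMeasurable ?_
  filter_upwards [hUb] with x ⟨h0, h1⟩
  rwa [Real.norm_eq_abs, abs_of_nonneg h0]

lemma weak_duality (T : Measure ℝ) [IsProbabilityMeasure T]
    (hX : Integrable (fun x : ℝ => x) T) (α : ℝ) (hα : α ∈ Set.Ioo (0:ℝ) 1)
    (t : ℝ) (U : ℝ → ℝ) (hU : Measurable U)
    (hUb : ∀ᵐ x ∂T, 0 ≤ U x ∧ U x ≤ (1 - α)⁻¹) (hU1 : (∫ x, U x ∂T) = 1) :
    ∫ x, x * U x ∂T ≤ t + (1 - α)⁻¹ * ∫ x, max (x - t) 0 ∂T := by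
  set β := (1 - α)⁻¹ with hβ
  have hβ0 : 0 < β := inv_pos.mpr (by linarith [hα.2])
  have hUi : Integrable U T := U_integrable T U hU hUb
  have hmi : Integrable (fun x : ℝ => max (x - t) 0) T := maxpos_integrable T hX t
  have hxi : Integrable (fun x : ℝ => x * U x) T := mulU_integrable T hX U hU hUb
  have key : ∫ x, x * U x ∂T ≤ ∫ x, (t * U x + β * max (x - t) 0) ∂T := by
    refine integral_mono_ae hxi ((hUi.const_mul t).add (hmi.const_mul β)) ?_
    filter_upwards [hUb] with x ⟨h0, h1⟩
    have h2 : (x - t) * U x ≤ β * max (x - t) 0 := by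
      rcases le_total x t with h | h
      · have : (x - t) * U x ≤ 0 := mul_nonpos_of_nonpos_of_nonneg (by linarith) h0
        have : 0 ≤ β * max (x - t) 0 := mul_nonneg hβ0.le (le_max_right _ _)
        linarith
      · have hm : max (x - t) 0 = x - t := max_eq_left (by linarith)
        rw [hm]
        calc (x - t) * U x ≤ (x - t) * β := mul_le_mul_of_nonneg_left h1 (by linarith)
        _ = β * (x - t) := mul_comm _ _
    nlinarith [h2]
  rw [integral_add (hUi.const_mul t) (hmi.const_mul β), integral_const_mul, integral_const_mul,
    hU1, mul_one] at key
  exact key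



lemma primal_dual_eq (T : Measure ℝ) [IsProbabilityMeasure T]
    (hX : Integrable (fun x : ℝ => x) T) (α : ℝ) (hα : α ∈ Set.Ioo (0:ℝ) 1)
    (q a b : ℝ) (hbα : b ≤ α) (hαa : α ≤ a) (ha1 : a ≤ 1) (hb0 : 0 ≤ b)
    (hIoi : T (Set.Ioi q) = ENNReal.ofReal (1 - a))
    (hsing : T {q} = ENNReal.ofReal (a - b)) :
    ∃ U : ℝ → ℝ, Measurable U ∧ (∀ᵐ x ∂T, 0 ≤ U x ∧ U x ≤ (1 - α)⁻¹) ∧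
      (∫ x, U x ∂T) = 1 ∧
      (∫ x, x * U x ∂T) = q + (1 - α)⁻¹ * ∫ x, max (x - q) 0 ∂T := by
  have h1α : (0:ℝ) < 1 - α := by linarith [hα.2]
  set β := (1 - α)⁻¹ with hβ
  have hβ0 : 0 < β := inv_pos.mpr h1α
  have hβ1 : β * (1 - α) = 1 := inv_mul_cancel₀ (ne_of_gt h1α)
  have hba : b ≤ a := le_trans hbα hαa
  have hnum : 0 ≤ 1 - β * (1 - a) := by nlinarith
  set c := (1 - β * (1 - a)) / (a - b) with hc
  have hcm : c * (a - b) = 1 - β * (1 - a) := by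
    by_cases hab : a = b
    · have haα : a = α := le_antisymm (hab ▸ hbα) hαa
      rw [hab, sub_self, mul_zero]
      have : b = α := hab ▸ haα
      rw [this]
      nlinarith [hβ1]
    · exact div_mul_cancel₀ _ (sub_ne_zero.mpr fun h => hab h)
  have hc0 : 0 ≤ c := div_nonneg hnum (by linarith)
  have hcβ : c ≤ β := by
    by_cases hab : a = b
    · rw [hc, hab, sub_self, div_zero]; exact hβ0.le
    · have hab' : 0 < a - b := lt_of_le_of_ne (by linarith) (fun h => hab (by linarith))
      rw [hc, div_le_iff₀ hab']
      nlinarith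
  set U : ℝ → ℝ := fun x =>
    Set.indicator (Set.Ioi q) (fun _ => β) x + Set.indicator {q} (fun _ => c) x with hU
  have hUmeas : Measurable U :=
    (measurable_const.indicator measurableSet_Ioi).add
      (measurable_const.indicator (measurableSet_singleton q))
  have hbound : ∀ x, 0 ≤ U x ∧ U x ≤ β := by
    intro x
    simp only [hU, Set.indicator_apply, Set.mem_Ioi, Set.mem_singleton_iff]
    split_ifs with h1 h2
    · exfalso; rw [h2] at h1; exact lt_irrefl q h1
    · constructor <;> linarith
    · constructor <;> linarith
    · constructor <;> linarith
  -- toReal values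
  have hG : (T (Set.Ioi q)).toReal = 1 - a := by
    rw [hIoi, ENNReal.toReal_ofReal (by linarith)]
  have hm : (T {q}).toReal = a - b := by
    rw [hsing, ENNReal.toReal_ofReal (by linarith)]
  -- integral of U
  have hint1 : Integrable (Set.indicator (Set.Ioi q) (fun _ => β)) T :=
    (integrable_const β).indicator measurableSet_Ioi
  have hint2 : Integrable (Set.indicator ({q} : Set ℝ) (fun _ => c)) T :=
    (integrable_const c).indicator (measurableSet_singleton q)
  have hintU : (∫ x, U x ∂T) = 1 := by
    simp only [hU]
    rw [integral_add hint1 hint2, integral_indicator_const _ measurableSet_Ioi,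
      integral_indicator_const _ (measurableSet_singleton q), measureReal_def, measureReal_def, hG, hm]
    simp only [smul_eq_mul]
    nlinarith [hcm]
  -- integral of x * U x
  have hxU : (fun x : ℝ => x * U x) =
      (fun x => Set.indicator (Set.Ioi q) (fun y => y * β) x
        + Set.indicator ({q} : Set ℝ) (fun y => y * c) x) := by
    funext x
    simp only [hU, Set.indicator_apply]
    split_ifs <;> ring
  have hintx1 : Integrable (Set.indicator (Set.Ioi q) (fun y : ℝ => y * β)) T :=
    (hX.mul_const β).indicator measurableSet_Ioi
  have hintx2 : Integrable (Set.indicator ({q} : Set ℝ) (fun y : ℝ => y * c)) T :=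
    (hX.mul_const c).indicator (measurableSet_singleton q)
  have hxUval : (∫ x, x * U x ∂T)
      = (∫ x in Set.Ioi q, x ∂T) * β + (a - b) * (q * c) := by
    rw [hxU, integral_add hintx1 hintx2,
      integral_indicator measurableSet_Ioi, integral_indicator (measurableSet_singleton q)]
    have h2 : (∫ y in ({q} : Set ℝ), y * c ∂T) = (a - b) * (q * c) := by
      rw [setIntegral_congr_fun (measurableSet_singleton q)
        (g := fun _ => q * c) (fun y hy => by rw [Set.mem_singleton_iff] at hy; rw [hy]),
        setIntegral_const, measureReal_def, hm, smul_eq_mul]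
    rw [h2, integral_mul_const]
  -- integral of max
  have hmax : (fun x : ℝ => max (x - q) 0) = Set.indicator (Set.Ioi q) (fun y => y - q) := by
    funext x
    simp only [Set.indicator_apply, Set.mem_Ioi]
    split_ifs with h
    · exact max_eq_left (by linarith)
    · exact max_eq_right (by push_neg at h; linarith)
  have hmaxval : (∫ x, max (x - q) 0 ∂T) = (∫ x in Set.Ioi q, x ∂T) - (1 - a) * q := by
    rw [hmax, integral_indicator measurableSet_Ioi]
    rw [integral_sub hX.integrableOn (integrableOn_const (measure_ne_top T _))]
    rw [setIntegral_const, measureReal_def, hG, smul_eq_mul]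
  refine ⟨U, hUmeas, Filter.Eventually.of_forall hbound, hintU, ?_⟩
  rw [hxUval, hmaxval]
  linear_combination q * hcm

open MeasureTheory
open scoped ENNReal

/-- Dual representation of the superquantile (CVaR): for a probability
distribution `T` on `ℝ` with identity in `L^p` for some `p ∈ (1, ∞)` and
`α ∈ (0,1)`,
`inf_t { t + (1/(1−α))·E[(R − t)₊] }` equals the supremum of `E_T[R·U]` over
densities `U` with `0 ≤ U ≤ 1/(1−α)` `T`-a.e. and `E_T[U] = 1`. -/
theorem cvar_dual_representation
    (T : Measure ℝ) [IsProbabilityMeasure T]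
    (p : ℝ≥0∞) (hp : 1 < p) (hp' : p ≠ ⊤)
    (hLp : MemLp (fun x : ℝ => x) p T)
    (α : ℝ) (hα : α ∈ Set.Ioo (0:ℝ) 1) :
    sInf {v : ℝ | ∃ t : ℝ, v = t + (1 - α)⁻¹ * ∫ x, max (x - t) 0 ∂T}
      = sSup {v : ℝ | ∃ U : ℝ → ℝ, Measurable U ∧
          (∀ᵐ x ∂T, 0 ≤ U x ∧ U x ≤ (1 - α)⁻¹) ∧
          (∫ x, U x ∂T) = 1 ∧ v = ∫ x, x * U x ∂T} := by
  have hX : Integrable (fun x : ℝ => x) T := hLp.integrable hp.le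
  obtain ⟨q, a, b, hbα, hαa, ha1, hb0, hIoi, hsing⟩ := quantile_exists T α hα
  obtain ⟨U, hUmeas, hUb, hU1, hUeq⟩ :=
    primal_dual_eq T hX α hα q a b hbα hαa ha1 hb0 hIoi hsing
  set P := {v : ℝ | ∃ t : ℝ, v = t + (1 - α)⁻¹ * ∫ x, max (x - t) 0 ∂T} with hP
  set D := {v : ℝ | ∃ U : ℝ → ℝ, Measurable U ∧
      (∀ᵐ x ∂T, 0 ≤ U x ∧ U x ≤ (1 - α)⁻¹) ∧
      (∫ x, U x ∂T) = 1 ∧ v = ∫ x, x * U x ∂T} with hD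
  have hs_mem : (q + (1 - α)⁻¹ * ∫ x, max (x - q) 0 ∂T) ∈ P := ⟨q, rfl⟩
  have hu_mem : (∫ x, x * U x ∂T) ∈ D := ⟨U, hUmeas, hUb, hU1, rfl⟩
  have hweak : ∀ v ∈ D, ∀ w ∈ P, v ≤ w := by
    rintro v ⟨V, hV, hVb, hV1, rfl⟩ w ⟨t, rfl⟩
    exact weak_duality T hX α hα t V hV hVb hV1
  have hbddP : BddBelow P := ⟨_, fun w hw => hweak _ hu_mem w hw⟩
  have hbddD : BddAbove D := ⟨_, fun v hv => hweak v hv _ hs_mem⟩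
  refine le_antisymm ?_ ?_
  · calc sInf P ≤ q + (1 - α)⁻¹ * ∫ x, max (x - q) 0 ∂T := csInf_le hbddP hs_mem
    _ = ∫ x, x * U x ∂T := hUeq.symm
    _ ≤ sSup D := le_csSup hbddD hu_mem
  · exact le_csInf ⟨_, hs_mem⟩ fun w hw => csSup_le ⟨_, hu_mem⟩ fun v hv => hweak v hv w hw
end
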